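/- arXiv:2505.06458 — 3 statements merged into one kernel-verified Lean document; each statement's English description precedes it below -/
import Mathlib

section
/- For all u, v, ξ ∈ ℝ^d, |D(u)ξ − D(v)ξ| ≤ (3α_l + 4α_t)·|u − v|·|ξ|. In particular, the Bear–Scheidegger dispersion–diffusion tensor u ↦ D(u) is Lipschitz continuous from ℝ^d to the space of linear maps on ℝ^d, verifying the Lipschitz continuity assumed of the dispersion–diffusion matrix in the miscible displacement model. -/
open scoped RealInnerProductSpace

private lemma g_norm_le {E : Type*} [NormedAddCommGroup E] [InnerProductSpace ℝ E]
    (u ξ : E) : ‖(⟪u, ξ⟫ / ‖u‖) • u‖ ≤ ‖u‖ * ‖ξ‖ := by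
  rcases eq_or_ne u 0 with rfl | hu
  · simp
  · have hu' : (0:ℝ) < ‖u‖ := norm_pos_iff.mpr hu
    rw [norm_smul, Real.norm_eq_abs, abs_div, abs_norm, div_mul_eq_mul_div,
      div_le_iff₀ hu']
    have := abs_real_inner_le_norm u ξ
    nlinarith [norm_nonneg u]

private lemma g_lip {E : Type*} [NormedAddCommGroup E] [InnerProductSpace ℝ E]
    (u v ξ : E) (hu : u ≠ 0) (hv : v ≠ 0) :
    ‖(⟪u, ξ⟫ / ‖u‖) • u - (⟪v, ξ⟫ / ‖v‖) • v‖ ≤ 3 * ‖u - v‖ * ‖ξ‖ := by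
  have ha : (0:ℝ) < ‖u‖ := norm_pos_iff.mpr hu
  have hb : (0:ℝ) < ‖v‖ := norm_pos_iff.mpr hv
  set p := ⟪u, ξ⟫ with hp
  set q := ⟪v, ξ⟫ with hq
  have key : (p / ‖u‖) • u - (q / ‖v‖) • v
      = ((p - q) / ‖u‖) • u + (q * (‖v‖ - ‖u‖) / (‖u‖ * ‖v‖)) • u
        + (q / ‖v‖) • (u - v) := by
    match_scalars <;> field_simp <;> ring
  have hpq : |p - q| ≤ ‖u - v‖ * ‖ξ‖ := by
    have h : p - q = ⟪u - v, ξ⟫ := by rw [inner_sub_left]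
    rw [h]; exact abs_real_inner_le_norm _ _
  have hq' : |q| ≤ ‖v‖ * ‖ξ‖ := abs_real_inner_le_norm _ _
  have hba : |‖v‖ - ‖u‖| ≤ ‖u - v‖ := by
    rw [abs_sub_comm]; exact abs_norm_sub_norm_le u v
  rw [key]
  have t1 : ‖((p - q) / ‖u‖) • u‖ ≤ ‖u - v‖ * ‖ξ‖ := by
    rw [norm_smul, Real.norm_eq_abs, abs_div, abs_norm, div_mul_eq_mul_div,
      div_le_iff₀ ha]
    nlinarith [norm_nonneg (u - v), norm_nonneg ξ]
  have t2 : ‖(q * (‖v‖ - ‖u‖) / (‖u‖ * ‖v‖)) • u‖ ≤ ‖u - v‖ * ‖ξ‖ := by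
    rw [norm_smul, Real.norm_eq_abs, abs_div, abs_mul, abs_mul, abs_norm, abs_norm,
      div_mul_eq_mul_div, div_le_iff₀ (by positivity)]
    have h1 : |q| * |‖v‖ - ‖u‖| ≤ ‖v‖ * ‖ξ‖ * ‖u - v‖ :=
      mul_le_mul hq' hba (abs_nonneg _) (by positivity)
    nlinarith [mul_le_mul_of_nonneg_right h1 ha.le]
  have t3 : ‖(q / ‖v‖) • (u - v)‖ ≤ ‖u - v‖ * ‖ξ‖ := by
    rw [norm_smul, Real.norm_eq_abs, abs_div, abs_norm, div_mul_eq_mul_div,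
      div_le_iff₀ hb]
    nlinarith [norm_nonneg (u - v), abs_nonneg q]
  calc ‖((p - q) / ‖u‖) • u + (q * (‖v‖ - ‖u‖) / (‖u‖ * ‖v‖)) • u + (q / ‖v‖) • (u - v)‖
      ≤ ‖((p - q) / ‖u‖) • u‖ + ‖(q * (‖v‖ - ‖u‖) / (‖u‖ * ‖v‖)) • u‖
        + ‖(q / ‖v‖) • (u - v)‖ := norm_add₃_le
    _ ≤ 3 * ‖u - v‖ * ‖ξ‖ := by linarith

/-- Lipschitz continuity of the Bear–Scheidegger dispersion–diffusion
tensor: for all `u, v, ξ ∈ ℝ^d`, `|D(u)ξ − D(v)ξ| ≤ (3 αl + 4 αt) |u − v| |ξ|`. -/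
theorem bear_scheidegger_lipschitz
    (d : ℕ) (hd : 1 ≤ d) (d₀ αl αt : ℝ)
    (hd₀ : 0 < d₀) (hαl : 0 < αl) (hαt : 0 < αt)
    (D : EuclideanSpace ℝ (Fin d) → EuclideanSpace ℝ (Fin d) → EuclideanSpace ℝ (Fin d))
    (hD0 : ∀ ξ, D 0 ξ = d₀ • ξ)
    (hD : ∀ u ξ, u ≠ 0 →
      D u ξ = d₀ • ξ + αl • ((⟪u, ξ⟫ / ‖u‖) • u)
        + αt • (‖u‖ • ξ - (⟪u, ξ⟫ / ‖u‖) • u))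
    (u v ξ : EuclideanSpace ℝ (Fin d)) :
    ‖D u ξ - D v ξ‖ ≤ (3 * αl + 4 * αt) * ‖u - v‖ * ‖ξ‖ := by
  have hξ := norm_nonneg ξ
  rcases eq_or_ne u 0 with rfl | hu <;> rcases eq_or_ne v 0 with rfl | hv
  · simp [hD0]
  · -- u = 0, v ≠ 0
    rw [hD0, hD v ξ hv]
    have h1 : d₀ • ξ - (d₀ • ξ + αl • ((⟪v, ξ⟫ / ‖v‖) • v)
        + αt • (‖v‖ • ξ - (⟪v, ξ⟫ / ‖v‖) • v))
        = -(αl • ((⟪v, ξ⟫ / ‖v‖) • v)) - αt • (‖v‖ • ξ - (⟪v, ξ⟫ / ‖v‖) • v) := by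
      abel
    rw [h1, show ‖(0:EuclideanSpace ℝ (Fin d)) - v‖ = ‖v‖ by simp]
    have hg := g_norm_le v ξ
    have hA : ‖-(αl • ((⟪v, ξ⟫ / ‖v‖) • v))‖ ≤ αl * (‖v‖ * ‖ξ‖) := by
      rw [norm_neg, norm_smul, Real.norm_eq_abs, abs_of_pos hαl]
      exact mul_le_mul_of_nonneg_left hg hαl.le
    have hB : ‖αt • (‖v‖ • ξ - (⟪v, ξ⟫ / ‖v‖) • v)‖ ≤ αt * (2 * (‖v‖ * ‖ξ‖)) := by
      rw [norm_smul, Real.norm_eq_abs, abs_of_pos hαt]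
      refine mul_le_mul_of_nonneg_left ?_ hαt.le
      calc ‖‖v‖ • ξ - (⟪v, ξ⟫ / ‖v‖) • v‖ ≤ ‖‖v‖ • ξ‖ + ‖(⟪v, ξ⟫ / ‖v‖) • v‖ :=
            norm_sub_le _ _
        _ ≤ 2 * (‖v‖ * ‖ξ‖) := by
            rw [norm_smul, Real.norm_eq_abs, abs_norm]; linarith
    calc ‖-(αl • ((⟪v, ξ⟫ / ‖v‖) • v)) - αt • (‖v‖ • ξ - (⟪v, ξ⟫ / ‖v‖) • v)‖
        ≤ ‖-(αl • ((⟪v, ξ⟫ / ‖v‖) • v))‖ + ‖αt • (‖v‖ • ξ - (⟪v, ξ⟫ / ‖v‖) • v)‖ :=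
          norm_sub_le _ _
      _ ≤ (3 * αl + 4 * αt) * ‖v‖ * ‖ξ‖ := by
          nlinarith [mul_nonneg (norm_nonneg v) hξ]
  · -- u ≠ 0, v = 0
    rw [hD0, hD u ξ hu]
    have h1 : (d₀ • ξ + αl • ((⟪u, ξ⟫ / ‖u‖) • u)
        + αt • (‖u‖ • ξ - (⟪u, ξ⟫ / ‖u‖) • u)) - d₀ • ξ
        = αl • ((⟪u, ξ⟫ / ‖u‖) • u) + αt • (‖u‖ • ξ - (⟪u, ξ⟫ / ‖u‖) • u) := by
      abel
    rw [h1, show ‖u - (0:EuclideanSpace ℝ (Fin d))‖ = ‖u‖ by simp]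
    have hg := g_norm_le u ξ
    have hA : ‖αl • ((⟪u, ξ⟫ / ‖u‖) • u)‖ ≤ αl * (‖u‖ * ‖ξ‖) := by
      rw [norm_smul, Real.norm_eq_abs, abs_of_pos hαl]
      exact mul_le_mul_of_nonneg_left hg hαl.le
    have hB : ‖αt • (‖u‖ • ξ - (⟪u, ξ⟫ / ‖u‖) • u)‖ ≤ αt * (2 * (‖u‖ * ‖ξ‖)) := by
      rw [norm_smul, Real.norm_eq_abs, abs_of_pos hαt]
      refine mul_le_mul_of_nonneg_left ?_ hαt.le
      calc ‖‖u‖ • ξ - (⟪u, ξ⟫ / ‖u‖) • u‖ ≤ ‖‖u‖ • ξ‖ + ‖(⟪u, ξ⟫ / ‖u‖) • u‖ :=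
            norm_sub_le _ _
        _ ≤ 2 * (‖u‖ * ‖ξ‖) := by
            rw [norm_smul, Real.norm_eq_abs, abs_norm]; linarith
    calc ‖αl • ((⟪u, ξ⟫ / ‖u‖) • u) + αt • (‖u‖ • ξ - (⟪u, ξ⟫ / ‖u‖) • u)‖
        ≤ ‖αl • ((⟪u, ξ⟫ / ‖u‖) • u)‖ + ‖αt • (‖u‖ • ξ - (⟪u, ξ⟫ / ‖u‖) • u)‖ :=
          norm_add_le _ _
      _ ≤ (3 * αl + 4 * αt) * ‖u‖ * ‖ξ‖ := by
          nlinarith [mul_nonneg (norm_nonneg u) hξ]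
  · -- both nonzero
    rw [hD u ξ hu, hD v ξ hv]
    set gu := (⟪u, ξ⟫ / ‖u‖) • u with hgu
    set gv := (⟪v, ξ⟫ / ‖v‖) • v with hgv
    have h1 : (d₀ • ξ + αl • gu + αt • (‖u‖ • ξ - gu))
        - (d₀ • ξ + αl • gv + αt • (‖v‖ • ξ - gv))
        = αl • (gu - gv) + αt • ((‖u‖ - ‖v‖) • ξ - (gu - gv)) := by
      match_scalars <;> ring
    rw [h1]
    have hgl : ‖gu - gv‖ ≤ 3 * ‖u - v‖ * ‖ξ‖ := g_lip u v ξ hu hv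
    have hn : |‖u‖ - ‖v‖| ≤ ‖u - v‖ := abs_norm_sub_norm_le u v
    have hA : ‖αl • (gu - gv)‖ ≤ αl * (3 * ‖u - v‖ * ‖ξ‖) := by
      rw [norm_smul, Real.norm_eq_abs, abs_of_pos hαl]
      exact mul_le_mul_of_nonneg_left hgl hαl.le
    have hB : ‖αt • ((‖u‖ - ‖v‖) • ξ - (gu - gv))‖ ≤ αt * (4 * ‖u - v‖ * ‖ξ‖) := by
      rw [norm_smul, Real.norm_eq_abs, abs_of_pos hαt]
      refine mul_le_mul_of_nonneg_left ?_ hαt.le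
      calc ‖(‖u‖ - ‖v‖) • ξ - (gu - gv)‖ ≤ ‖(‖u‖ - ‖v‖) • ξ‖ + ‖gu - gv‖ :=
            norm_sub_le _ _
        _ ≤ 4 * ‖u - v‖ * ‖ξ‖ := by
            rw [norm_smul, Real.norm_eq_abs]
            nlinarith [mul_le_mul_of_nonneg_right hn hξ]
    calc ‖αl • (gu - gv) + αt • ((‖u‖ - ‖v‖) • ξ - (gu - gv))‖
        ≤ ‖αl • (gu - gv)‖ + ‖αt • ((‖u‖ - ‖v‖) • ξ - (gu - gv))‖ := norm_add_le _ _
      _ ≤ (3 * αl + 4 * αt) * ‖u - v‖ * ‖ξ‖ := by nlinarith []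
end

section
/- For every δ with 0 ≤ δ ≤ T, the time translates of the right piecewise-constant interpolant satisfy ∫_δ^T ‖c_h(t) − c_h(t − δ)‖² dt ≤ T·δ·( τ Σ_{i=1}^N ‖(cⁱ − c^{i−1})/τ‖² ). In particular, if τ Σ_{i=1}^N ‖(cⁱ − c^{i−1})/τ‖² ≤ M₁, then ∫_δ^T ‖c_h(t) − c_h(t − δ)‖² dt ≤ T·M₁·δ, so the translates tend to zero uniformly in the partition as δ → 0. -/
/-!
On `(δ, T]` the difference `c_h(t) - c_h(t - δ)` telescopes into the jumps `c^{m+1} - c^m` of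
`c_h` at the nodes `t_m ∈ [t - δ, t)`. By Cauchy–Schwarz over at most `N` jumps,
`‖c_h(t) - c_h(t - δ)‖² ≤ N Σ_m 1_{(t_m, t_m + δ]}(t) ‖c^{m+1} - c^m‖²`,
and each indicator has integral `δ`. Since `N = T / τ`, integrating gives
`T δ τ Σ_m ‖(c^{m+1} - c^m) / τ‖²`.
-/

open MeasureTheory Finset

theorem norm_sum_sq_le_card_mul {ι E : Type*} [SeminormedAddCommGroup E] (s : Finset ι)
    (v : ι → E) : ‖∑ i ∈ s, v i‖ ^ 2 ≤ #s * ∑ i ∈ s, ‖v i‖ ^ 2 :=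
  (pow_le_pow_left₀ (norm_nonneg _) (norm_sum_le s v) 2).trans (sq_sum_le_card_mul_sum_sq ..)

theorem mem_Ico_ceil_div_iff {τ s t : ℝ} (hτ : 0 < τ) {m : ℕ} :
    m ∈ Ico ⌈s / τ⌉₊ ⌈t / τ⌉₊ ↔ s ≤ m * τ ∧ m * τ < t := by
  rw [mem_Ico, Nat.ceil_le, Nat.lt_ceil, div_le_iff₀ hτ, lt_div_iff₀ hτ]

theorem integrable_indicator_Ioc_const (a b r : ℝ) :
    Integrable ((Set.Ioc a b).indicator fun _ ↦ r) :=
  (integrable_indicator_iff measurableSet_Ioc).2 (integrableOn_const measure_Ioc_lt_top.ne)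

section SumIndicatorIoc

variable {ι : Type*} (s : Finset ι) (a r : ι → ℝ) {δ : ℝ}

theorem integrable_sum_indicator_Ioc :
    Integrable fun t ↦ ∑ i ∈ s, (Set.Ioc (a i) (a i + δ)).indicator (fun _ ↦ r i) t :=
  integrable_finsetSum _ fun _ _ ↦ integrable_indicator_Ioc_const ..

theorem integral_sum_indicator_Ioc (hδ : 0 ≤ δ) :
    ∫ t, ∑ i ∈ s, (Set.Ioc (a i) (a i + δ)).indicator (fun _ ↦ r i) t =
      δ * ∑ i ∈ s, r i := by
  rw [integral_finsetSum _ fun _ _ ↦ integrable_indicator_Ioc_const .., mul_sum]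
  refine sum_congr rfl fun i _ ↦ ?_
  rw [integral_indicator_const _ measurableSet_Ioc, Real.volume_real_Ioc_of_le (by linarith),
    add_sub_cancel_left, smul_eq_mul]

end SumIndicatorIoc

def IsPiecewiseConstInterpolant {X : Type*} (N : ℕ) (τ : ℝ) (c : ℕ → X) (ch : ℝ → X) :
    Prop :=
  ∀ i ∈ Icc 1 N, ∀ t ∈ Set.Ioc (((i : ℝ) - 1) * τ) ((i : ℝ) * τ), ch t = c i

namespace IsPiecewiseConstInterpolant

variable {X : Type*} {N : ℕ} {τ : ℝ} {c : ℕ → X} {ch : ℝ → X}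

theorem apply_eq_ceil (h : IsPiecewiseConstInterpolant N τ c ch) (hτ : 0 < τ) {t : ℝ}
    (ht : t ∈ Set.Ioc 0 (N * τ)) : ch t = c ⌈t / τ⌉₊ := by
  have hpos : 0 < t / τ := div_pos ht.1 hτ
  have hmem : ⌈t / τ⌉₊ ∈ Icc 1 N :=
    mem_Icc.2 ⟨Nat.ceil_pos.2 hpos, Nat.ceil_le.2 ((div_le_iff₀ hτ).2 ht.2)⟩
  refine h _ hmem t ⟨?_, ?_⟩
  · rw [← lt_div_iff₀ hτ]
    linarith [Nat.ceil_lt_add_one hpos.le]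
  · exact (div_le_iff₀ hτ).1 (Nat.le_ceil _)

theorem sub_eq_sum_Ico [AddCommGroup X] (h : IsPiecewiseConstInterpolant N τ c ch) (hτ : 0 < τ)
    {s t : ℝ} (hs : 0 < s) (hst : s ≤ t) (ht : t ≤ N * τ) :
    ch t - ch s = ∑ m ∈ Ico ⌈s / τ⌉₊ ⌈t / τ⌉₊, (c (m + 1) - c m) := by
  rw [h.apply_eq_ceil hτ ⟨hs.trans_le hst, ht⟩, h.apply_eq_ceil hτ ⟨hs, hst.trans ht⟩,
    sum_Ico_sub c (Nat.ceil_mono (div_le_div_of_nonneg_right hst hτ.le))]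

theorem norm_sub_sq_le [SeminormedAddCommGroup X] (h : IsPiecewiseConstInterpolant N τ c ch)
    (hτ : 0 < τ) {δ t : ℝ} (hδ : 0 ≤ δ) (ht : t ∈ Set.Ioc δ (N * τ)) :
    ‖ch t - ch (t - δ)‖ ^ 2 ≤ N * ∑ m ∈ range N,
      (Set.Ioc (m * τ) (m * τ + δ)).indicator (fun _ ↦ ‖c (m + 1) - c m‖ ^ 2) t := by
  set S := Ico ⌈(t - δ) / τ⌉₊ ⌈t / τ⌉₊
  have hS : S ⊆ range N := by
    rw [range_eq_Ico]
    exact Ico_subset_Ico (Nat.zero_le _) (Nat.ceil_le.2 ((div_le_iff₀ hτ).2 ht.2))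
  have hmem : ∀ m : ℕ, m ∈ S ↔ t ∈ Set.Ioc (m * τ) (m * τ + δ) := fun m ↦ by
    rw [mem_Ico_ceil_div_iff hτ, Set.mem_Ioc]
    constructor <;> rintro ⟨h₁, h₂⟩ <;> constructor <;> linarith
  have hsum : ∑ m ∈ S, ‖c (m + 1) - c m‖ ^ 2 = ∑ m ∈ range N,
      (Set.Ioc (m * τ) (m * τ + δ)).indicator (fun _ ↦ ‖c (m + 1) - c m‖ ^ 2) t := by
    rw [← sum_subset hS fun m _ hm ↦ Set.indicator_of_notMem (mt (hmem m).2 hm) _]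
    exact sum_congr rfl fun m hm ↦ by rw [Set.indicator_of_mem ((hmem m).1 hm)]
  calc ‖ch t - ch (t - δ)‖ ^ 2 = ‖∑ m ∈ S, (c (m + 1) - c m)‖ ^ 2 := by
        rw [h.sub_eq_sum_Ico hτ (sub_pos.2 ht.1) (by linarith) ht.2]
    _ ≤ #S * ∑ m ∈ S, ‖c (m + 1) - c m‖ ^ 2 := norm_sum_sq_le_card_mul _ _
    _ ≤ N * ∑ m ∈ S, ‖c (m + 1) - c m‖ ^ 2 := by
        gcongr
        exact_mod_cast (card_le_card hS).trans (card_range N).le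
    _ = _ := by rw [hsum]

end IsPiecewiseConstInterpolant

theorem interpolant_time_translate_bound_general
    (X : Type*) [NormedAddCommGroup X] [NormedSpace ℝ X]
    (T : ℝ) (hT : 0 < T) (N : ℕ) (hN : 0 < N) (τ : ℝ) (hτ : τ = T / N)
    (c : ℕ → X) (ch : ℝ → X)
    (hch : ∀ i ∈ Finset.Icc 1 N, ∀ t ∈ Set.Ioc (((i : ℝ) - 1) * τ) ((i : ℝ) * τ),
      ch t = c i)
    (δ : ℝ) (hδ0 : 0 ≤ δ) :
    (∫ t in Set.Ioc δ T, ‖ch t - ch (t - δ)‖ ^ 2) ≤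
      T * δ * (τ * ∑ i ∈ Finset.Icc 1 N, ‖τ⁻¹ • (c i - c (i - 1))‖ ^ 2) := by
  have hτ0 : 0 < τ := hτ ▸ div_pos hT (Nat.cast_pos.2 hN)
  have hNτ : (N : ℝ) * τ = T := by rw [hτ]; field_simp
  set F : ℝ → ℝ := fun t ↦ N * ∑ m ∈ range N,
    (Set.Ioc (m * τ) (m * τ + δ)).indicator (fun _ ↦ ‖c (m + 1) - c m‖ ^ 2) t
  have hF : Integrable F := (integrable_sum_indicator_Ioc _ _ _).const_mul _
  have hF0 : ∀ t, 0 ≤ F t := fun t ↦ mul_nonneg N.cast_nonneg <|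
    sum_nonneg fun _ _ ↦ Set.indicator_nonneg (fun _ _ ↦ by positivity) t
  have hsum : ∑ i ∈ Icc 1 N, ‖τ⁻¹ • (c i - c (i - 1))‖ ^ 2 =
      τ⁻¹ ^ 2 * ∑ m ∈ range N, ‖c (m + 1) - c m‖ ^ 2 := by
    rw [← Ico_add_one_right_eq_Icc, sum_Ico_eq_sum_range, Nat.add_sub_cancel, mul_sum]
    simp only [add_comm 1, Nat.add_sub_cancel, norm_smul, mul_pow,
      Real.norm_of_nonneg (inv_nonneg.2 hτ0.le)]
  calc ∫ t in Set.Ioc δ T, ‖ch t - ch (t - δ)‖ ^ 2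
      ≤ ∫ t in Set.Ioc δ T, F t :=
        integral_mono_of_nonneg (ae_of_all _ fun _ ↦ by positivity) hF.integrableOn
          ((ae_restrict_iff' measurableSet_Ioc).2 (ae_of_all _ fun t ht ↦
            IsPiecewiseConstInterpolant.norm_sub_sq_le hch hτ0 hδ0 (hNτ ▸ ht)))
    _ ≤ ∫ t, F t := setIntegral_le_integral hF (ae_of_all _ hF0)
    _ = N * (δ * ∑ m ∈ range N, ‖c (m + 1) - c m‖ ^ 2) := by
        rw [integral_const_mul, integral_sum_indicator_Ioc _ _ _ hδ0]
    _ = _ := by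
        rw [hsum, ← hNτ]
        field_simp

/-- Time-translate estimate for the right piecewise-constant interpolant:
for every `0 ≤ δ ≤ T`,
`∫_δ^T ‖c_h(t) − c_h(t − δ)‖² dt ≤ T δ (τ Σᵢ ‖(cⁱ − c^{i−1})/τ‖²)`. -/
theorem interpolant_time_translate_bound
    (X : Type*) [NormedAddCommGroup X] [NormedSpace ℝ X]
    (T : ℝ) (hT : 0 < T) (N : ℕ) (hN : 0 < N) (τ : ℝ) (hτ : τ = T / N)
    (c : ℕ → X) (ch : ℝ → X)
    (hch : ∀ i ∈ Finset.Icc 1 N, ∀ t ∈ Set.Ioc (((i : ℝ) - 1) * τ) ((i : ℝ) * τ),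
      ch t = c i)
    (δ : ℝ) (hδ0 : 0 ≤ δ) (hδT : δ ≤ T) :
    (∫ t in Set.Ioc δ T, ‖ch t - ch (t - δ)‖ ^ 2) ≤
      T * δ * (τ * ∑ i ∈ Finset.Icc 1 N, ‖τ⁻¹ • (c i - c (i - 1))‖ ^ 2) :=
  interpolant_time_translate_bound_general X T hT N hN τ hτ c ch hch δ hδ0
end

section
/- Assume A_n → A almost everywhere on Ω, u_n ⇀ u weakly in L²(μ; ℝ^d), and ∫_Ω ⟨A_n(x)u_n(x), u_n(x)⟩ dμ(x) → ∫_Ω ⟨A(x)u(x), u(x)⟩ dμ(x). Then u_n → u strongly in L²(μ; ℝ^d), i.e. ∫_Ω |u_n(x) − u(x)|² dμ(x) → 0. (This is the step by which the discrete Darcy velocities, which converge weakly and whose energies converge, are shown to converge strongly in L².) -/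
/-!
With `wₙ = uₙ - u`, coercivity gives `k₀ ∫ |wₙ|² ≤ ∫ ⟨wₙ, Aₙ wₙ⟩`, and by symmetry of `Aₙ`,
`∫ ⟨wₙ, Aₙ wₙ⟩ = ∫ ⟨uₙ, Aₙ uₙ⟩ - 2 ∫ ⟨uₙ, Aₙ u⟩ + ∫ ⟨u, Aₙ u⟩`. The energies converge to
`∫ ⟨u, A u⟩` by hypothesis. Writing `Aₙ u = A u + (Aₙ - A) u`, the pairings with `A u ∈ L²`
converge to `∫ ⟨u, A u⟩` by weak convergence, while `(Aₙ - A) u → 0` in `L²` by dominated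
convergence; since the energy bound keeps `uₙ` bounded in `L²`, the pairings with `(Aₙ - A) u`
vanish by Cauchy–Schwarz. Hence `∫ ⟨wₙ, Aₙ wₙ⟩ → 0`.
-/

open MeasureTheory Matrix Filter Topology

section LinearAlgebra

variable {ι : Type*} [Fintype ι]

lemma dotProduct_self_nonneg (v : ι → ℝ) : 0 ≤ v ⬝ᵥ v := by
  simpa using dotProduct_star_self_nonneg v

lemma two_mul_abs_dotProduct_le (a b : ι → ℝ) : 2 * |a ⬝ᵥ b| ≤ a ⬝ᵥ a + b ⬝ᵥ b := by
  have hsub := dotProduct_self_nonneg (a - b)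
  have hadd := dotProduct_self_nonneg (a + b)
  simp only [sub_dotProduct, dotProduct_sub, add_dotProduct, dotProduct_add,
    dotProduct_comm b a] at hsub hadd
  cases abs_cases (a ⬝ᵥ b) <;> linarith

lemma sub_dotProduct_sub_le (a b : ι → ℝ) : (a - b) ⬝ᵥ (a - b) ≤ 2 * (a ⬝ᵥ a + b ⬝ᵥ b) := by
  have hadd := dotProduct_self_nonneg (a + b)
  simp only [sub_dotProduct, dotProduct_sub, add_dotProduct, dotProduct_add,
    dotProduct_comm b a] at hadd ⊢
  linarith

structure Matrix.IsEllipticWith (k₀ k₁ : ℝ) (M : Matrix ι ι ℝ) : Prop where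
  isSymm : M.IsSymm
  le_form : ∀ ξ, k₀ * (ξ ⬝ᵥ ξ) ≤ ξ ⬝ᵥ M *ᵥ ξ
  form_le : ∀ ξ, ξ ⬝ᵥ M *ᵥ ξ ≤ k₁ * (ξ ⬝ᵥ ξ)

namespace Matrix.IsEllipticWith

variable {k₀ k₁ : ℝ} {M : Matrix ι ι ℝ}

lemma dotProduct_mulVec_comm (hM : M.IsEllipticWith k₀ k₁) (ξ η : ι → ℝ) :
    ξ ⬝ᵥ M *ᵥ η = η ⬝ᵥ M *ᵥ ξ := by
  rw [← dotProduct_transpose_mulVec, hM.isSymm.eq]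

lemma form_nonneg (hM : M.IsEllipticWith k₀ k₁) (hk₀ : 0 ≤ k₀) (ξ : ι → ℝ) :
    0 ≤ ξ ⬝ᵥ M *ᵥ ξ :=
  (mul_nonneg hk₀ (dotProduct_self_nonneg ξ)).trans (hM.le_form ξ)

lemma sq_dotProduct_mulVec_le (hM : M.IsEllipticWith k₀ k₁) (hk₀ : 0 ≤ k₀) (ξ η : ι → ℝ) :
    (ξ ⬝ᵥ M *ᵥ η) ^ 2 ≤ (ξ ⬝ᵥ M *ᵥ ξ) * (η ⬝ᵥ M *ᵥ η) := by
  have hquad : ∀ t : ℝ,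
      0 ≤ (ξ ⬝ᵥ M *ᵥ ξ) * (t * t) + 2 * (ξ ⬝ᵥ M *ᵥ η) * t + η ⬝ᵥ M *ᵥ η := fun t => by
    have hexpand : (t • ξ + η) ⬝ᵥ M *ᵥ (t • ξ + η) =
        (ξ ⬝ᵥ M *ᵥ ξ) * (t * t) + 2 * (ξ ⬝ᵥ M *ᵥ η) * t + η ⬝ᵥ M *ᵥ η := by
      simp only [mulVec_add, mulVec_smul, dotProduct_add, add_dotProduct, dotProduct_smul,
        smul_dotProduct, smul_eq_mul, hM.dotProduct_mulVec_comm η ξ]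
      ring
    exact hexpand ▸ hM.form_nonneg hk₀ _
  have := discrim_le_zero hquad
  rw [discrim] at this
  linarith

lemma mulVec_dotProduct_mulVec_le (hM : M.IsEllipticWith k₀ k₁) (hk₀ : 0 ≤ k₀) (v : ι → ℝ) :
    (M *ᵥ v) ⬝ᵥ (M *ᵥ v) ≤ k₁ ^ 2 * (v ⬝ᵥ v) := by
  set w := M *ᵥ v
  have hw := dotProduct_self_nonneg w
  rcases hw.eq_or_lt with hw0 | hwpos
  · rw [← hw0]
    exact mul_nonneg (sq_nonneg k₁) (dotProduct_self_nonneg v)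
  have hcs : (w ⬝ᵥ w) * (w ⬝ᵥ w) ≤ (w ⬝ᵥ w) * (k₁ ^ 2 * (v ⬝ᵥ v)) :=
    calc (w ⬝ᵥ w) * (w ⬝ᵥ w) = (w ⬝ᵥ M *ᵥ v) ^ 2 := by ring
      _ ≤ (w ⬝ᵥ M *ᵥ w) * (v ⬝ᵥ M *ᵥ v) := hM.sq_dotProduct_mulVec_le hk₀ w v
      _ ≤ (k₁ * (w ⬝ᵥ w)) * (k₁ * (v ⬝ᵥ v)) :=
        mul_le_mul (hM.form_le w) (hM.form_le v) (hM.form_nonneg hk₀ v)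
          ((hM.form_nonneg hk₀ w).trans (hM.form_le w))
      _ = (w ⬝ᵥ w) * (k₁ ^ 2 * (v ⬝ᵥ v)) := by ring
  exact le_of_mul_le_mul_left hcs hwpos

end Matrix.IsEllipticWith

end LinearAlgebra

section SquareIntegrable

variable {Ω ι : Type*} [MeasurableSpace Ω] [Fintype ι]

/-- Square integrability for the Euclidean norm, without putting a norm on `ι → ℝ`
(whose default norm is the sup norm). -/
def SqIntegrable (μ : Measure Ω) (v : Ω → ι → ℝ) : Prop :=
  Measurable v ∧ Integrable (fun x => v x ⬝ᵥ v x) μ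

variable {μ : Measure Ω} {k₀ k₁ : ℝ} {u v w : Ω → ι → ℝ}

lemma measurable_mulVec {A : Ω → Matrix ι ι ℝ} (hA : ∀ i j, Measurable fun x => A x i j)
    (hv : Measurable v) : Measurable fun x => A x *ᵥ v x :=
  measurable_pi_lambda _ fun i => by
    have hAi : Measurable fun x => A x i := measurable_pi_lambda _ (hA i)
    simp only [mulVec]
    fun_prop

namespace SqIntegrable

lemma integrable_dotProduct (hv : SqIntegrable μ v) (hw : SqIntegrable μ w) :
    Integrable (fun x => v x ⬝ᵥ w x) μ := by
  have hvw : Measurable fun x => v x ⬝ᵥ w x := by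
    have := hv.1; have := hw.1; fun_prop
  refine ((hv.2.add hw.2).div_const 2).mono' hvw.aestronglyMeasurable (ae_of_all _ fun x => ?_)
  have := two_mul_abs_dotProduct_le (v x) (w x)
  rw [Real.norm_eq_abs, Pi.add_apply]
  linarith

lemma sub (hv : SqIntegrable μ v) (hw : SqIntegrable μ w) : SqIntegrable μ (v - w) := by
  have hvw : Measurable fun x => (v - w) x ⬝ᵥ (v - w) x := by
    have := hv.1.sub hw.1; fun_prop
  refine ⟨hv.1.sub hw.1,
    ((hv.2.add hw.2).const_mul 2).mono' hvw.aestronglyMeasurable (ae_of_all _ fun x => ?_)⟩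
  rw [Real.norm_eq_abs, abs_of_nonneg (dotProduct_self_nonneg _)]
  exact sub_dotProduct_sub_le (v x) (w x)

lemma mulVec (hv : SqIntegrable μ v) {A : Ω → Matrix ι ι ℝ}
    (hA : ∀ i j, Measurable fun x => A x i j) (hE : ∀ᵐ x ∂μ, (A x).IsEllipticWith k₀ k₁)
    (hk₀ : 0 ≤ k₀) : SqIntegrable μ fun x => A x *ᵥ v x := by
  have hAv := measurable_mulVec hA hv.1
  have hAvAv : Measurable fun x => (A x *ᵥ v x) ⬝ᵥ (A x *ᵥ v x) := by fun_prop
  refine ⟨hAv, (hv.2.const_mul (k₁ ^ 2)).mono' hAvAv.aestronglyMeasurable ?_⟩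
  filter_upwards [hE] with x hAx
  rw [Real.norm_eq_abs, abs_of_nonneg (dotProduct_self_nonneg _)]
  exact hAx.mulVec_dotProduct_mulVec_le hk₀ (v x)

lemma sq_integral_dotProduct_le (hv : SqIntegrable μ v) (hw : SqIntegrable μ w) :
    (∫ x, v x ⬝ᵥ w x ∂μ) ^ 2 ≤ (∫ x, v x ⬝ᵥ v x ∂μ) * ∫ x, w x ⬝ᵥ w x ∂μ := by
  have hvw := hv.integrable_dotProduct hw
  have hquad : ∀ t : ℝ, 0 ≤ (∫ x, v x ⬝ᵥ v x ∂μ) * (t * t) + 2 * (∫ x, v x ⬝ᵥ w x ∂μ) * t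
      + ∫ x, w x ⬝ᵥ w x ∂μ := fun t => by
    have hexpand : ∀ x, (t • v x + w x) ⬝ᵥ (t • v x + w x) =
        (t * t) * (v x ⬝ᵥ v x) + (2 * t) * (v x ⬝ᵥ w x) + w x ⬝ᵥ w x := fun x => by
      simp only [dotProduct_add, add_dotProduct, dotProduct_smul, smul_dotProduct, smul_eq_mul,
        dotProduct_comm (w x) (v x)]
      ring
    have hint := integral_nonneg (μ := μ)
      (f := fun x => (t • v x + w x) ⬝ᵥ (t • v x + w x)) fun x => dotProduct_self_nonneg _
    simp only [hexpand] at hint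
    have hlin : Integrable (fun x => (t * t) * (v x ⬝ᵥ v x) + (2 * t) * (v x ⬝ᵥ w x)) μ :=
      (hv.2.const_mul _).add (hvw.const_mul _)
    rw [integral_add hlin hw.2, integral_add (hv.2.const_mul _) (hvw.const_mul _),
      integral_const_mul, integral_const_mul] at hint
    linarith
  have := discrim_le_zero hquad
  rw [discrim] at this
  linarith

lemma integral_sub_dotProduct_mulVec_sub (hu : SqIntegrable μ u) (hv : SqIntegrable μ v)
    {A : Ω → Matrix ι ι ℝ} (hA : ∀ i j, Measurable fun x => A x i j)
    (hE : ∀ᵐ x ∂μ, (A x).IsEllipticWith k₀ k₁) (hk₀ : 0 ≤ k₀) :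
    ∫ x, (u x - v x) ⬝ᵥ A x *ᵥ (u x - v x) ∂μ
      = ∫ x, u x ⬝ᵥ A x *ᵥ u x ∂μ - 2 * ∫ x, u x ⬝ᵥ A x *ᵥ v x ∂μ
        + ∫ x, v x ⬝ᵥ A x *ᵥ v x ∂μ := by
  have huu := hu.integrable_dotProduct (hu.mulVec hA hE hk₀)
  have huv := hu.integrable_dotProduct (hv.mulVec hA hE hk₀)
  have hvv := hv.integrable_dotProduct (hv.mulVec hA hE hk₀)
  have hexpand : (fun x => (u x - v x) ⬝ᵥ A x *ᵥ (u x - v x)) =ᵐ[μ]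
      fun x => u x ⬝ᵥ A x *ᵥ u x - 2 * u x ⬝ᵥ A x *ᵥ v x + v x ⬝ᵥ A x *ᵥ v x := by
    filter_upwards [hE] with x hAx
    simp only [mulVec_sub, dotProduct_sub, sub_dotProduct, hAx.dotProduct_mulVec_comm (v x) (u x)]
    ring
  have hdiff : Integrable (fun x => u x ⬝ᵥ A x *ᵥ u x - 2 * u x ⬝ᵥ A x *ᵥ v x) μ :=
    huu.sub (huv.const_mul 2)
  rw [integral_congr_ae hexpand, integral_add hdiff hvv,
    integral_sub huu (huv.const_mul 2), integral_const_mul]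

lemma mul_integral_dotProduct_self_le (hv : SqIntegrable μ v) {A : Ω → Matrix ι ι ℝ}
    (hA : ∀ i j, Measurable fun x => A x i j) (hE : ∀ᵐ x ∂μ, (A x).IsEllipticWith k₀ k₁)
    (hk₀ : 0 ≤ k₀) : k₀ * ∫ x, v x ⬝ᵥ v x ∂μ ≤ ∫ x, v x ⬝ᵥ A x *ᵥ v x ∂μ := by
  rw [← integral_const_mul]
  refine integral_mono_ae (hv.2.const_mul k₀) (hv.integrable_dotProduct (hv.mulVec hA hE hk₀)) ?_
  filter_upwards [hE] with x hAx
  exact hAx.le_form (v x)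

end SqIntegrable

end SquareIntegrable

section Convergence

variable {Ω ι : Type*} [MeasurableSpace Ω] [Fintype ι] {μ : Measure Ω} {k₀ k₁ : ℝ}

lemma tendsto_integral_dotProduct_zero {u w : ℕ → Ω → ι → ℝ} {B : ℝ}
    (hu : ∀ n, SqIntegrable μ (u n)) (hw : ∀ n, SqIntegrable μ (w n))
    (hB : ∀ n, ∫ x, u n x ⬝ᵥ u n x ∂μ ≤ B)
    (hw0 : Tendsto (fun n => ∫ x, w n x ⬝ᵥ w n x ∂μ) atTop (𝓝 0)) :
    Tendsto (fun n => ∫ x, u n x ⬝ᵥ w n x ∂μ) atTop (𝓝 0) := by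
  have hsqrt : Tendsto (fun n => √(B * ∫ x, w n x ⬝ᵥ w n x ∂μ)) atTop (𝓝 0) := by
    simpa using (hw0.const_mul B).sqrt
  refine squeeze_zero_norm (fun n => ?_) hsqrt
  rw [Real.norm_eq_abs]
  refine Real.abs_le_sqrt (((hu n).sq_integral_dotProduct_le (hw n)).trans ?_)
  exact mul_le_mul_of_nonneg_right (hB n) (integral_nonneg fun x => dotProduct_self_nonneg _)

variable {A : ℕ → Ω → Matrix ι ι ℝ} {Alim : Ω → Matrix ι ι ℝ}

lemma tendsto_integral_mulVec_sub_dotProduct_self {v : Ω → ι → ℝ} (hv : SqIntegrable μ v)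
    (hA : ∀ n i j, Measurable fun x => A n x i j) (hAlim : ∀ i j, Measurable fun x => Alim x i j)
    (hE : ∀ n, ∀ᵐ x ∂μ, (A n x).IsEllipticWith k₀ k₁)
    (hElim : ∀ᵐ x ∂μ, (Alim x).IsEllipticWith k₀ k₁) (hk₀ : 0 ≤ k₀)
    (hae : ∀ᵐ x ∂μ, Tendsto (fun n => A n x) atTop (𝓝 (Alim x))) :
    Tendsto (fun n => ∫ x, (A n x *ᵥ v x - Alim x *ᵥ v x) ⬝ᵥ (A n x *ᵥ v x - Alim x *ᵥ v x) ∂μ)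
      atTop (𝓝 0) := by
  have hAv := fun n => measurable_mulVec (hA n) hv.1
  have hAlimv := measurable_mulVec hAlim hv.1
  rw [← integral_zero Ω ℝ]
  refine tendsto_integral_of_dominated_convergence (fun x => 4 * k₁ ^ 2 * (v x ⬝ᵥ v x))
    (fun n => Measurable.aestronglyMeasurable (by have := hAv n; fun_prop))
    (hv.2.const_mul _) (fun n => ?_) ?_
  · filter_upwards [hE n, hElim] with x hAx hAlimx
    rw [Real.norm_eq_abs, abs_of_nonneg (dotProduct_self_nonneg _)]
    have := sub_dotProduct_sub_le (A n x *ᵥ v x) (Alim x *ᵥ v x)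
    linarith [hAx.mulVec_dotProduct_mulVec_le hk₀ (v x),
      hAlimx.mulVec_dotProduct_mulVec_le hk₀ (v x)]
  · filter_upwards [hae] with x hx
    have hcont : Continuous fun M : Matrix ι ι ℝ =>
        (M *ᵥ v x - Alim x *ᵥ v x) ⬝ᵥ (M *ᵥ v x - Alim x *ᵥ v x) := by fun_prop
    simpa only [sub_self, zero_dotProduct, Function.comp_def] using (hcont.tendsto (Alim x)).comp hx

lemma tendsto_integral_dotProduct_mulVec {u : ℕ → Ω → ι → ℝ} {ulim v : Ω → ι → ℝ} {B : ℝ}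
    (hu : ∀ n, SqIntegrable μ (u n)) (hB : ∀ n, ∫ x, u n x ⬝ᵥ u n x ∂μ ≤ B)
    (hv : SqIntegrable μ v)
    (hA : ∀ n i j, Measurable fun x => A n x i j) (hAlim : ∀ i j, Measurable fun x => Alim x i j)
    (hE : ∀ n, ∀ᵐ x ∂μ, (A n x).IsEllipticWith k₀ k₁)
    (hElim : ∀ᵐ x ∂μ, (Alim x).IsEllipticWith k₀ k₁) (hk₀ : 0 ≤ k₀)
    (hae : ∀ᵐ x ∂μ, Tendsto (fun n => A n x) atTop (𝓝 (Alim x)))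
    (hweak : Tendsto (fun n => ∫ x, u n x ⬝ᵥ Alim x *ᵥ v x ∂μ) atTop
      (𝓝 (∫ x, ulim x ⬝ᵥ Alim x *ᵥ v x ∂μ))) :
    Tendsto (fun n => ∫ x, u n x ⬝ᵥ A n x *ᵥ v x ∂μ) atTop
      (𝓝 (∫ x, ulim x ⬝ᵥ Alim x *ᵥ v x ∂μ)) := by
  have hAv := fun n => hv.mulVec (hA n) (hE n) hk₀
  have hAlimv := hv.mulVec hAlim hElim hk₀
  have hdiff := tendsto_integral_dotProduct_zero (w := fun n x => A n x *ᵥ v x - Alim x *ᵥ v x)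
    hu (fun n => (hAv n).sub hAlimv) hB
    (tendsto_integral_mulVec_sub_dotProduct_self hv hA hAlim hE hElim hk₀ hae)
  have hsplit : ∀ n, ∫ x, u n x ⬝ᵥ Alim x *ᵥ v x ∂μ
      + ∫ x, u n x ⬝ᵥ (A n x *ᵥ v x - Alim x *ᵥ v x) ∂μ = ∫ x, u n x ⬝ᵥ A n x *ᵥ v x ∂μ := by
    intro n
    rw [← integral_add (g := fun x => u n x ⬝ᵥ (A n x *ᵥ v x - Alim x *ᵥ v x))
      ((hu n).integrable_dotProduct hAlimv) ((hu n).integrable_dotProduct ((hAv n).sub hAlimv))]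
    simp only [dotProduct_sub, add_sub_cancel]
  simpa only [hsplit, add_zero] using hweak.add hdiff

end Convergence

theorem weak_plus_energy_implies_strong_general
    (Ω : Type*) [MeasurableSpace Ω] (μ : Measure Ω)
    (d : ℕ) (k₀ k₁ : ℝ) (hk₀ : 0 < k₀)
    (A : ℕ → Ω → Matrix (Fin d) (Fin d) ℝ) (Alim : Ω → Matrix (Fin d) (Fin d) ℝ)
    (hAmeas : ∀ n, ∀ i j, Measurable fun x => A n x i j)
    (hAlimmeas : ∀ i j, Measurable fun x => Alim x i j)
    (hsymm : ∀ᵐ x ∂μ, (∀ n, (A n x).IsSymm) ∧ (Alim x).IsSymm)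
    (hellip : ∀ᵐ x ∂μ, ∀ ξ : Fin d → ℝ,
      (∀ n, k₀ * (ξ ⬝ᵥ ξ) ≤ ξ ⬝ᵥ ((A n x) *ᵥ ξ) ∧ ξ ⬝ᵥ ((A n x) *ᵥ ξ) ≤ k₁ * (ξ ⬝ᵥ ξ)) ∧
        (k₀ * (ξ ⬝ᵥ ξ) ≤ ξ ⬝ᵥ ((Alim x) *ᵥ ξ) ∧ ξ ⬝ᵥ ((Alim x) *ᵥ ξ) ≤ k₁ * (ξ ⬝ᵥ ξ)))
    (hae : ∀ᵐ x ∂μ, Tendsto (fun n => A n x) atTop (nhds (Alim x)))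
    (u : ℕ → Ω → Fin d → ℝ) (ulim : Ω → Fin d → ℝ)
    (humeas : ∀ n, Measurable (u n)) (hulimmeas : Measurable ulim)
    (huL2 : ∀ n, Integrable (fun x => u n x ⬝ᵥ u n x) μ)
    (hulimL2 : Integrable (fun x => ulim x ⬝ᵥ ulim x) μ)
    (hweak : ∀ v : Ω → Fin d → ℝ, Measurable v → Integrable (fun x => v x ⬝ᵥ v x) μ →
      Tendsto (fun n => ∫ x, u n x ⬝ᵥ v x ∂μ) atTop (nhds (∫ x, ulim x ⬝ᵥ v x ∂μ)))
    (henergy : Tendsto (fun n => ∫ x, u n x ⬝ᵥ ((A n x) *ᵥ u n x) ∂μ) atTop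
      (nhds (∫ x, ulim x ⬝ᵥ ((Alim x) *ᵥ ulim x) ∂μ))) :
    Tendsto (fun n => ∫ x, (u n x - ulim x) ⬝ᵥ (u n x - ulim x) ∂μ) atTop (nhds 0) := by
  have hE : ∀ n, ∀ᵐ x ∂μ, (A n x).IsEllipticWith k₀ k₁ := fun n => by
    filter_upwards [hsymm, hellip] with x hs he
    exact ⟨hs.1 n, fun ξ => ((he ξ).1 n).1, fun ξ => ((he ξ).1 n).2⟩
  have hElim : ∀ᵐ x ∂μ, (Alim x).IsEllipticWith k₀ k₁ := by
    filter_upwards [hsymm, hellip] with x hs he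
    exact ⟨hs.2, fun ξ => (he ξ).2.1, fun ξ => (he ξ).2.2⟩
  have hu : ∀ n, SqIntegrable μ (u n) := fun n => ⟨humeas n, huL2 n⟩
  have hulim : SqIntegrable μ ulim := ⟨hulimmeas, hulimL2⟩
  have hAulim := hulim.mulVec hAlimmeas hElim hk₀.le
  obtain ⟨C, hC⟩ := henergy.bddAbove_range
  have hB : ∀ n, ∫ x, u n x ⬝ᵥ u n x ∂μ ≤ C / k₀ := fun n => by
    rw [le_div_iff₀' hk₀]
    exact ((hu n).mul_integral_dotProduct_self_le (hAmeas n) (hE n) hk₀.le).trans (hC ⟨n, rfl⟩)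
  have hcross := tendsto_integral_dotProduct_mulVec hu hB hulim hAmeas hAlimmeas hE hElim hk₀.le
    hae (hweak _ hAulim.1 hAulim.2)
  have hself := tendsto_integral_dotProduct_mulVec (fun _ => hulim) (fun _ => le_rfl) hulim
    hAmeas hAlimmeas hE hElim hk₀.le hae tendsto_const_nhds
  have hform : Tendsto (fun n => ∫ x, (u n x - ulim x) ⬝ᵥ A n x *ᵥ (u n x - ulim x) ∂μ)
      atTop (𝓝 0) := by
    have := (henergy.sub (hcross.const_mul 2)).add hself
    rw [show ∀ E : ℝ, E - 2 * E + E = 0 by intro; ring] at this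
    exact this.congr fun n =>
      ((hu n).integral_sub_dotProduct_mulVec_sub hulim (hAmeas n) (hE n) hk₀.le).symm
  have hcoercive : ∀ n, ∫ x, (u n x - ulim x) ⬝ᵥ (u n x - ulim x) ∂μ
      ≤ k₀⁻¹ * ∫ x, (u n x - ulim x) ⬝ᵥ A n x *ᵥ (u n x - ulim x) ∂μ := fun n => by
    rw [le_inv_mul_iff₀ hk₀]
    exact ((hu n).sub hulim).mul_integral_dotProduct_self_le (hAmeas n) (hE n) hk₀.le
  exact squeeze_zero (fun n => integral_nonneg fun x => dotProduct_self_nonneg _) hcoercive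
    (by simpa using hform.const_mul k₀⁻¹)

/-- Let `A_n, A` be measurable, a.e. symmetric, uniformly elliptic and
bounded matrix fields with `A_n → A` a.e., and let `u_n ⇀ u` weakly in `L²(μ; ℝ^d)` with
convergence of the energies `∫ ⟨A_n u_n, u_n⟩ → ∫ ⟨A u, u⟩`. Then `u_n → u` strongly in
`L²(μ; ℝ^d)`, i.e. `∫ |u_n − u|² dμ → 0`. -/
theorem weak_plus_energy_implies_strong
    (Ω : Type*) [MeasurableSpace Ω] (μ : Measure Ω) [SigmaFinite μ]
    (d : ℕ) (hd : 1 ≤ d) (k₀ k₁ : ℝ) (hk₀ : 0 < k₀) (hk : k₀ ≤ k₁)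
    (A : ℕ → Ω → Matrix (Fin d) (Fin d) ℝ) (Alim : Ω → Matrix (Fin d) (Fin d) ℝ)
    (hAmeas : ∀ n, ∀ i j, Measurable fun x => A n x i j)
    (hAlimmeas : ∀ i j, Measurable fun x => Alim x i j)
    (hsymm : ∀ᵐ x ∂μ, (∀ n, (A n x).IsSymm) ∧ (Alim x).IsSymm)
    (hellip : ∀ᵐ x ∂μ, ∀ ξ : Fin d → ℝ,
      (∀ n, k₀ * (ξ ⬝ᵥ ξ) ≤ ξ ⬝ᵥ ((A n x) *ᵥ ξ) ∧ ξ ⬝ᵥ ((A n x) *ᵥ ξ) ≤ k₁ * (ξ ⬝ᵥ ξ)) ∧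
        (k₀ * (ξ ⬝ᵥ ξ) ≤ ξ ⬝ᵥ ((Alim x) *ᵥ ξ) ∧ ξ ⬝ᵥ ((Alim x) *ᵥ ξ) ≤ k₁ * (ξ ⬝ᵥ ξ)))
    (hae : ∀ᵐ x ∂μ, Tendsto (fun n => A n x) atTop (nhds (Alim x)))
    (u : ℕ → Ω → Fin d → ℝ) (ulim : Ω → Fin d → ℝ)
    (humeas : ∀ n, Measurable (u n)) (hulimmeas : Measurable ulim)
    (huL2 : ∀ n, Integrable (fun x => u n x ⬝ᵥ u n x) μ)
    (hulimL2 : Integrable (fun x => ulim x ⬝ᵥ ulim x) μ)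
    (hweak : ∀ v : Ω → Fin d → ℝ, Measurable v → Integrable (fun x => v x ⬝ᵥ v x) μ →
      Tendsto (fun n => ∫ x, u n x ⬝ᵥ v x ∂μ) atTop (nhds (∫ x, ulim x ⬝ᵥ v x ∂μ)))
    (henergy : Tendsto (fun n => ∫ x, u n x ⬝ᵥ ((A n x) *ᵥ u n x) ∂μ) atTop
      (nhds (∫ x, ulim x ⬝ᵥ ((Alim x) *ᵥ ulim x) ∂μ))) :
    Tendsto (fun n => ∫ x, (u n x - ulim x) ⬝ᵥ (u n x - ulim x) ∂μ) atTop (nhds 0) :=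
  weak_plus_energy_implies_strong_general Ω μ d k₀ k₁ hk₀ A Alim hAmeas hAlimmeas hsymm hellip hae u
    ulim humeas hulimmeas huL2 hulimL2 hweak henergy
end
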